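/- Let D' = {(x,t_2,t_3) ∈ ℝ³ : 3t_3 + 2x³ + 6xt_2 ≠ 0} and define on D' the rational functions u_1 = 6(t_2 + x²)/(3t_3 + 2x³ + 6xt_2) and u_2 = 3(6xt_3 − 5x⁴ − 6x²t_2 − 9t_2²)/(3t_3 + 2x³ + 6xt_2)². Then (u_1,u_2) satisfies on D' the Antonowicz–Fordy two-component cKdV flow: ∂u_1/∂t_2 = ∂_x u_2 + (3/2)u_1 ∂_x u_1 and ∂u_2/∂t_2 = u_2 ∂_x u_1 + (1/2)u_1 ∂_x u_2 + (1/4)∂_x³ u_1. -/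

import Mathlib

/-!
Write `τ = 3t₃ + 2x³ + 6xt₂`, so that `u₁ = τₓ/τ` and `u₂ = v/2 - (3/4)u₁²` with `v = τₓₓ/τ`;
put also `w = τₓₓₓ/τ = 12/τ`. Since `τₓₓₓₓ = 0` and `τ` solves the heat equation
`τ_{t₂} = τₓₓ/2`, the logarithmic quotient rule `(p/τ)' = p'/τ - (p/τ)(τ'/τ)` closes up:
`u₁ₓ = v - u₁²`, `vₓ = w - vu₁`, `wₓ = -wu₁`, `u_{1,t₂} = (w - vu₁)/2`, `v_{t₂} = -v²/2`.
All derivatives in the flow are therefore polynomials in `u₁, v, w`, and both equations become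
polynomial identities in these three quantities.
-/

/-- `u₁ = 6(t₂ + x²)/(3t₃ + 2x³ + 6xt₂)`. -/
noncomputable def u1sol (x t2 t3 : ℝ) : ℝ :=
  6 * (t2 + x ^ 2) / (3 * t3 + 2 * x ^ 3 + 6 * x * t2)

/-- `u₂ = 3(6xt₃ − 5x⁴ − 6x²t₂ − 9t₂²)/(3t₃ + 2x³ + 6xt₂)²`. -/
noncomputable def u2sol (x t2 t3 : ℝ) : ℝ :=
  3 * (6 * x * t3 - 5 * x ^ 4 - 6 * x ^ 2 * t2 - 9 * t2 ^ 2)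
    / (3 * t3 + 2 * x ^ 3 + 6 * x * t2) ^ 2

theorem HasDerivAt.div_logDeriv {𝕜 : Type*} [NontriviallyNormedField 𝕜] {p τ : 𝕜 → 𝕜}
    {p' τ' y : 𝕜} (hp : HasDerivAt p p' y) (hτ : HasDerivAt τ τ' y) (hτy : τ y ≠ 0) :
    HasDerivAt (fun z => p z / τ z) (p' / τ y - p y / τ y * (τ' / τ y)) y :=
  (hp.fun_div hτ hτy).congr_deriv (by field_simp)

theorem iteratedDeriv_three_eq_of_hasDerivAt {𝕜 : Type*} [NontriviallyNormedField 𝕜]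
    {f f₁ f₂ : 𝕜 → 𝕜} {f₃ x : 𝕜} (h₁ : ∀ᶠ y in nhds x, HasDerivAt f (f₁ y) y)
    (h₂ : ∀ᶠ y in nhds x, HasDerivAt f₁ (f₂ y) y) (h₃ : HasDerivAt f₂ f₃ x) :
    iteratedDeriv 3 f x = f₃ := by
  have hf₁ : deriv f =ᶠ[nhds x] f₁ := h₁.mono fun y hy => hy.deriv
  have hf₂ : deriv (deriv f) =ᶠ[nhds x] f₂ := hf₁.deriv.trans (h₂.mono fun y hy => hy.deriv)
  rw [iteratedDeriv_succ, iteratedDeriv_succ, iteratedDeriv_one]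
  exact hf₂.deriv_eq.trans h₃.deriv

noncomputable section

def tau (x t2 t3 : ℝ) : ℝ := 3 * t3 + 2 * x ^ 3 + 6 * x * t2

def vsol (x t2 t3 : ℝ) : ℝ := 12 * x / tau x t2 t3

def wsol (x t2 t3 : ℝ) : ℝ := 12 / tau x t2 t3

def u1solX (x t2 t3 : ℝ) : ℝ := vsol x t2 t3 - u1sol x t2 t3 ^ 2

def u1solXX (x t2 t3 : ℝ) : ℝ :=
  wsol x t2 t3 - 3 * u1sol x t2 t3 * vsol x t2 t3 + 2 * u1sol x t2 t3 ^ 3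

end

variable {x t2 t3 : ℝ}

/-- Also valid where `τ = 0`, both sides being `0` there by the convention `a / 0 = 0`. -/
theorem u2sol_eq (x t2 t3 : ℝ) :
    u2sol x t2 t3 = vsol x t2 t3 / 2 - 3 / 4 * u1sol x t2 t3 ^ 2 := by
  unfold u2sol vsol u1sol tau
  by_cases hτ : 3 * t3 + 2 * x ^ 3 + 6 * x * t2 = 0
  · simp [hτ]
  · field_simp
    ring

theorem hasDerivAt_tau_x : HasDerivAt (tau · t2 t3) (6 * (t2 + x ^ 2)) x :=
  ((((hasDerivAt_pow 3 x).const_mul 2).const_add (3 * t3)).add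
    (((hasDerivAt_id' x).const_mul 6).mul_const t2)).congr_deriv (by ring)

theorem hasDerivAt_tau_t : HasDerivAt (tau x · t3) (6 * x) t2 :=
  (((hasDerivAt_id' t2).const_mul (6 * x)).const_add (3 * t3 + 2 * x ^ 3)).congr_deriv
    (mul_one _)

theorem hasDerivAt_u1sol_x (hτ : tau x t2 t3 ≠ 0) :
    HasDerivAt (u1sol · t2 t3) (u1solX x t2 t3) x := by
  have hp : HasDerivAt (fun y => 6 * (t2 + y ^ 2)) (12 * x) x :=
    (((hasDerivAt_pow 2 x).const_add t2).const_mul 6).congr_deriv (by ring)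
  refine (hp.div_logDeriv hasDerivAt_tau_x hτ).congr_deriv ?_
  simp only [u1solX, vsol, u1sol, tau]
  ring

theorem hasDerivAt_vsol_x (hτ : tau x t2 t3 ≠ 0) :
    HasDerivAt (vsol · t2 t3) (wsol x t2 t3 - vsol x t2 t3 * u1sol x t2 t3) x :=
  (((hasDerivAt_id' x).const_mul 12).div_logDeriv hasDerivAt_tau_x hτ).congr_deriv
    (by simp only [vsol, wsol, u1sol, tau, mul_one])

theorem hasDerivAt_wsol_x (hτ : tau x t2 t3 ≠ 0) :
    HasDerivAt (wsol · t2 t3) (-(wsol x t2 t3 * u1sol x t2 t3)) x :=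
  ((hasDerivAt_const x 12).div_logDeriv hasDerivAt_tau_x hτ).congr_deriv
    (by simp only [wsol, u1sol, tau]; ring)

theorem hasDerivAt_u1sol_t (hτ : tau x t2 t3 ≠ 0) :
    HasDerivAt (u1sol x · t3) ((wsol x t2 t3 - vsol x t2 t3 * u1sol x t2 t3) / 2) t2 := by
  have hp : HasDerivAt (fun s => 6 * (s + x ^ 2)) 6 t2 :=
    (((hasDerivAt_id' t2).add_const (x ^ 2)).const_mul 6).congr_deriv (by ring)
  refine (hp.div_logDeriv hasDerivAt_tau_t hτ).congr_deriv ?_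
  simp only [vsol, wsol, u1sol, tau]
  ring

theorem hasDerivAt_vsol_t (hτ : tau x t2 t3 ≠ 0) :
    HasDerivAt (vsol x · t3) (-vsol x t2 t3 ^ 2 / 2) t2 :=
  ((hasDerivAt_const t2 (12 * x)).div_logDeriv hasDerivAt_tau_t hτ).congr_deriv
    (by simp only [vsol, tau]; ring)

theorem hasDerivAt_u1solX (hτ : tau x t2 t3 ≠ 0) :
    HasDerivAt (u1solX · t2 t3) (u1solXX x t2 t3) x :=
  ((hasDerivAt_vsol_x hτ).sub ((hasDerivAt_u1sol_x hτ).pow 2)).congr_deriv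
    (by simp only [u1solX, u1solXX]; push_cast; ring)

theorem hasDerivAt_u1solXX (hτ : tau x t2 t3 ≠ 0) :
    HasDerivAt (u1solXX · t2 t3)
      (-4 * wsol x t2 t3 * u1sol x t2 t3 - 3 * vsol x t2 t3 ^ 2
        + 12 * u1sol x t2 t3 ^ 2 * vsol x t2 t3 - 6 * u1sol x t2 t3 ^ 4) x :=
  (((hasDerivAt_wsol_x hτ).sub (((hasDerivAt_u1sol_x hτ).const_mul 3).mul
    (hasDerivAt_vsol_x hτ))).add (((hasDerivAt_u1sol_x hτ).pow 3).const_mul 2)).congr_deriv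
    (by simp only [u1solX]; push_cast; ring)

theorem hasDerivAt_u2sol_x (hτ : tau x t2 t3 ≠ 0) :
    HasDerivAt (u2sol · t2 t3)
      ((wsol x t2 t3 - vsol x t2 t3 * u1sol x t2 t3) / 2
        - 3 / 2 * u1sol x t2 t3 * u1solX x t2 t3) x := by
  rw [funext fun y => u2sol_eq y t2 t3]
  exact (((hasDerivAt_vsol_x hτ).div_const 2).sub
    (((hasDerivAt_u1sol_x hτ).pow 2).const_mul (3 / 4))).congr_deriv (by push_cast; ring)

theorem hasDerivAt_u2sol_t (hτ : tau x t2 t3 ≠ 0) :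
    HasDerivAt (u2sol x · t3)
      (-vsol x t2 t3 ^ 2 / 4
        - 3 / 4 * u1sol x t2 t3 * (wsol x t2 t3 - vsol x t2 t3 * u1sol x t2 t3)) t2 := by
  rw [funext fun s => u2sol_eq x s t3]
  exact (((hasDerivAt_vsol_t hτ).div_const 2).sub
    (((hasDerivAt_u1sol_t hτ).pow 2).const_mul (3 / 4))).congr_deriv (by push_cast; ring)

/-- On the set where `3t₃ + 2x³ + 6xt₂ ≠ 0`, `(u₁,u₂)` satisfies the Antonowicz–Fordy
form of the second flow of the two-component cKdV hierarchy:
`u_{1,t₂} = u_{2,x} + (3/2)u₁u_{1,x}` and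
`u_{2,t₂} = u₂u_{1,x} + (1/2)u₁u_{2,x} + (1/4)u_{1,xxx}`. -/
theorem rational_solution_antonowicz_fordy :
    ∀ x t2 t3 : ℝ, 3 * t3 + 2 * x ^ 3 + 6 * x * t2 ≠ 0 →
      (deriv (fun s => u1sol x s t3) t2
        = deriv (fun y => u2sol y t2 t3) x
          + (3 / 2) * u1sol x t2 t3 * deriv (fun y => u1sol y t2 t3) x)
      ∧ (deriv (fun s => u2sol x s t3) t2
        = u2sol x t2 t3 * deriv (fun y => u1sol y t2 t3) x
          + (1 / 2) * u1sol x t2 t3 * deriv (fun y => u2sol y t2 t3) x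
          + (1 / 4) * iteratedDeriv 3 (fun y => u1sol y t2 t3) x) := by
  intro x t2 t3 hτ
  have hτ_near : ∀ᶠ y in nhds x, tau y t2 t3 ≠ 0 :=
    (show Continuous (tau · t2 t3) by unfold tau; fun_prop).continuousAt.eventually_ne hτ
  rw [(hasDerivAt_u1sol_t hτ).deriv, (hasDerivAt_u2sol_t hτ).deriv,
    (hasDerivAt_u1sol_x hτ).deriv, (hasDerivAt_u2sol_x hτ).deriv,
    iteratedDeriv_three_eq_of_hasDerivAt (hτ_near.mono fun y hy => hasDerivAt_u1sol_x hy)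
      (hτ_near.mono fun y hy => hasDerivAt_u1solX hy) (hasDerivAt_u1solXX hτ), u2sol_eq]
  constructor <;> simp only [u1solX] <;> ring
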